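/- Let 0 < α < 1, let f be a continuous 2π-periodic real-valued function with f ∈ Lip(α), let β ≥ 0, and let {p_k} be a sequence of nonnegative numbers with P_n := Σ_{k=0}^{n} p_k ≠ 0. Define R_n(f;x) = (1/P_n) Σ_{k=0}^{n} p_k S_k(f;x) and suppose the matrix a_{n,k} = p_k/P_n (0 ≤ k ≤ n, zero otherwise) satisfies: there is a constant C, independent of n and m, with Σ_{k=0}^{m-1} (k+1)^β |a_{n,k}/(k+1)^β − a_{n,k+1}/(k+2)^β| ≤ C·a_{n,m} for all 0 ≤ m ≤ n. Then ‖R_n(f) − f‖_∞ = O( (p_n/P_n)^α ), with the implied constant independent of n. -/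

import Mathlib

/-!
With `D_k` the Dirichlet kernel and `K_n = ∑ₖ a_{n,k} D_k`,
`R_n f x - f x = π⁻¹ ∫₀^π (f (x + t) + f (x - t) - 2 f x) K_n(t) dt`, and the bracket is at most
`2 L t^α`. Since `2 sin (t/2) K_n(t) = ∑ₖ a_{n,k} sin ((k + 1/2) t)`, the positivity of the weights
gives `|K_n(t)| ≲ 1/t`, while Abel summation against `a_{n,k} / (k+1)^β`, whose weighted variation
is the left-hand side of the hypothesis, gives `|K_n(t)| ≲ a_{n,n} / t²`. Splitting the integral
at `δ = a_{n,n} = p_n / P_n`, both pieces are `O(δ^α)`. The same Abel summation gives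
`a_{n,m} ≤ (C + 1) a_{n,n}`, hence `δ > 0`.
-/

open Real MeasureTheory

/-- The `k`-th partial sum of the (trigonometric) Fourier series of `f` at `x`. -/
noncomputable def fourierPartialSum (f : ℝ → ℝ) (k : ℕ) (x : ℝ) : ℝ :=
  (1 / (2 * Real.pi)) * (∫ t in (-Real.pi)..Real.pi, f t) +
    ∑ j ∈ Finset.Icc 1 k,
      ((1 / Real.pi) * (∫ t in (-Real.pi)..Real.pi, f t * Real.cos (j * t)) * Real.cos (j * x) +
        (1 / Real.pi) * (∫ t in (-Real.pi)..Real.pi, f t * Real.sin (j * t)) * Real.sin (j * x))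

/-- The `A`-transform `T_{n,A}(f;x) = ∑_{k=0}^n a_{n,k} S_k(f;x)`. -/
noncomputable def matrixTransform (a : ℕ → ℕ → ℝ) (f : ℝ → ℝ) (n : ℕ) (x : ℝ) : ℝ :=
  ∑ k ∈ Finset.range (n + 1), a n k * fourierPartialSum f k x

/-- The modulus of continuity `ω(δ,f)`. -/
noncomputable def modulusOfContinuity (f : ℝ → ℝ) (δ : ℝ) : ℝ :=
  sSup {y : ℝ | ∃ x t : ℝ, |t| ≤ δ ∧ y = |f (x + t) - f x|}

open Finset

noncomputable def dirichletKernel (k : ℕ) (t : ℝ) : ℝ :=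
  1 / 2 + ∑ j ∈ Icc 1 k, cos (j * t)

@[fun_prop]
theorem continuous_dirichletKernel (k : ℕ) : Continuous (dirichletKernel k) := by
  unfold dirichletKernel; fun_prop

theorem dirichletKernel_neg (k : ℕ) (t : ℝ) : dirichletKernel k (-t) = dirichletKernel k t := by
  simp only [dirichletKernel, mul_neg, cos_neg]

theorem dirichletKernel_periodic (k : ℕ) : Function.Periodic (dirichletKernel k) (2 * π) := by
  intro t
  simp only [dirichletKernel, mul_add]
  congr 1
  refine sum_congr rfl fun j _ => ?_
  rw [cos_add_nat_mul_two_pi]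

theorem dirichletKernel_succ (k : ℕ) (t : ℝ) :
    dirichletKernel (k + 1) t = dirichletKernel k t + cos ((k + 1) * t) := by
  rw [dirichletKernel, sum_Icc_succ_top (by omega), ← add_assoc, ← dirichletKernel]
  push_cast; rfl

theorem two_mul_sin_half_mul_dirichletKernel (k : ℕ) (t : ℝ) :
    2 * sin (t / 2) * dirichletKernel k t = sin ((k + 1 / 2) * t) := by
  induction k with
  | zero =>
    rw [dirichletKernel, Icc_eq_empty (by omega), sum_empty, Nat.cast_zero, zero_add]
    ring_nf
  | succ k ih =>
    rw [dirichletKernel_succ, mul_add, ih,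
      show ((k + 1 : ℕ) + 1 / 2) * t = (k + 1) * t + t / 2 by push_cast; ring,
      show (k + 1 / 2) * t = (k + 1) * t - t / 2 by ring, sin_add, sin_sub]
    ring

theorem integral_dirichletKernel_zero_pi (k : ℕ) : ∫ t in 0..π, dirichletKernel k t = π / 2 := by
  unfold dirichletKernel
  rw [intervalIntegral.integral_add (by apply Continuous.intervalIntegrable; fun_prop)
      (by apply Continuous.intervalIntegrable; fun_prop),
    intervalIntegral.integral_finsetSum
      (fun j _ => by apply Continuous.intervalIntegrable; fun_prop)]
  have hzero : ∀ j ∈ Icc 1 k, ∫ t in 0..π, cos (j * t) = 0 := by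
    intro j hj
    have hj : (j : ℝ) ≠ 0 := by have := (mem_Icc.mp hj).1; positivity
    simp [intervalIntegral.integral_comp_mul_left (fun t => cos t) hj, sin_nat_mul_pi]
  rw [sum_congr rfl hzero, sum_const_zero, intervalIntegral.integral_const, add_zero, smul_eq_mul]
  ring

section fourier

variable {f : ℝ → ℝ}

theorem fourierPartialSum_eq_integral_dirichletKernel (hf : Continuous f) (k : ℕ) (x : ℝ) :
    fourierPartialSum f k x = 1 / π * ∫ t in -π..π, f t * dirichletKernel k (t - x) := by
  have hexpand : ∀ t, f t * dirichletKernel k (t - x) = f t * (1 / 2) + ∑ j ∈ Icc 1 k,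
      (f t * cos (j * t) * cos (j * x) + f t * sin (j * t) * sin (j * x)) := by
    intro t
    rw [dirichletKernel, mul_add, mul_sum]
    congr 1
    refine sum_congr rfl fun j _ => ?_
    rw [mul_sub, cos_sub]
    ring
  have hsplit : ∀ j : ℕ, ∫ t in -π..π, (f t * cos (j * t) * cos (j * x) +
      f t * sin (j * t) * sin (j * x)) = (∫ t in -π..π, f t * cos (j * t)) * cos (j * x) +
        (∫ t in -π..π, f t * sin (j * t)) * sin (j * x) := by
    intro j
    rw [intervalIntegral.integral_add (by apply Continuous.intervalIntegrable; fun_prop)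
        (by apply Continuous.intervalIntegrable; fun_prop),
      intervalIntegral.integral_mul_const, intervalIntegral.integral_mul_const]
  simp_rw [hexpand]
  rw [intervalIntegral.integral_add (by apply Continuous.intervalIntegrable; fun_prop)
      (by apply Continuous.intervalIntegrable; fun_prop),
    intervalIntegral.integral_finsetSum
      (fun j _ => by apply Continuous.intervalIntegrable; fun_prop),
    sum_congr rfl fun j _ => hsplit j, intervalIntegral.integral_mul_const, fourierPartialSum,
    mul_add, mul_sum]
  have hπ := pi_ne_zero
  congr 1
  · field_simp
  · exact sum_congr rfl fun j _ => by ring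

theorem fourierPartialSum_eq_integral_comp_add (hf : Continuous f)
    (hper : Function.Periodic f (2 * π)) (k : ℕ) (x : ℝ) :
    fourierPartialSum f k x = 1 / π * ∫ u in -π..π, f (x + u) * dirichletKernel k u := by
  set g : ℝ → ℝ := fun u => f (x + u) * dirichletKernel k u
  have hg : Function.Periodic g (2 * π) := fun u => by
    simp only [g, ← add_assoc, hper (x + u), dirichletKernel_periodic k u]
  have hshift := hg.intervalIntegral_add_eq (-π - x) (-π)
  rw [show -π - x + 2 * π = π - x by ring, show -π + 2 * π = π by ring] at hshift
  rw [fourierPartialSum_eq_integral_dirichletKernel hf, ← hshift,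
    ← intervalIntegral.integral_comp_sub_right g x]
  simp only [g, add_sub_cancel]

theorem intervalIntegral_neg_self_eq {g : ℝ → ℝ} (hg : Continuous g) (a : ℝ) :
    ∫ u in -a..a, g u = ∫ t in 0..a, (g t + g (-t)) := by
  rw [← intervalIntegral.integral_add_adjacent_intervals (b := 0)
      (hg.intervalIntegrable _ _) (hg.intervalIntegrable _ _),
    intervalIntegral.integral_add (f := g) (g := fun t => g (-t)) (hg.intervalIntegrable _ _)
      ((hg.comp continuous_neg).intervalIntegrable _ _),
    intervalIntegral.integral_comp_neg, neg_zero, add_comm]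

theorem fourierPartialSum_sub_eq_integral (hf : Continuous f)
    (hper : Function.Periodic f (2 * π)) (k : ℕ) (x : ℝ) :
    fourierPartialSum f k x - f x =
      1 / π * ∫ t in 0..π, (f (x + t) + f (x - t) - 2 * f x) * dirichletKernel k t := by
  have hsplit : ∫ t in 0..π, (f (x + t) + f (x - t) - 2 * f x) * dirichletKernel k t =
      (∫ t in 0..π, (f (x + t) * dirichletKernel k t + f (x + -t) * dirichletKernel k (-t))) -
        ∫ t in 0..π, 2 * f x * dirichletKernel k t := by
    rw [← intervalIntegral.integral_sub (by apply Continuous.intervalIntegrable; fun_prop)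
      (by apply Continuous.intervalIntegrable; fun_prop)]
    congr 1; ext t
    rw [dirichletKernel_neg, ← sub_eq_add_neg]
    ring
  rw [hsplit, intervalIntegral.integral_const_mul, integral_dirichletKernel_zero_pi,
    fourierPartialSum_eq_integral_comp_add hf hper,
    intervalIntegral_neg_self_eq (g := fun u => f (x + u) * dirichletKernel k u) (by fun_prop)]
  field_simp [pi_ne_zero]

end fourier

theorem two_mul_sin_half_mul_sum_sin (j : ℕ) (t : ℝ) :
    2 * sin (t / 2) * ∑ k ∈ range (j + 1), sin ((k + 1 / 2) * t) = 1 - cos ((j + 1) * t) := by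
  have htel : ∀ k : ℕ, 2 * sin (t / 2) * sin ((k + 1 / 2) * t) =
      cos (k * t) - cos (((k + 1 : ℕ) : ℝ) * t) := fun k => by
    rw [show (k : ℝ) * t = (k + 1 / 2) * t - t / 2 by ring,
      show ((k + 1 : ℕ) : ℝ) * t = (k + 1 / 2) * t + t / 2 by push_cast; ring, cos_sub, cos_add]
    ring
  rw [mul_sum, sum_congr rfl fun k _ => htel k, sum_range_sub']
  push_cast
  simp

theorem abs_sum_sin_le {t : ℝ} (ht : 0 < sin (t / 2)) (j : ℕ) :
    |∑ k ∈ range (j + 1), sin ((k + 1 / 2) * t)| ≤ 1 / sin (t / 2) := by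
  have hnum : |1 - cos ((j + 1) * t)| ≤ 2 := by
    rw [abs_le]; constructor <;> linarith [neg_one_le_cos ((j + 1) * t), cos_le_one ((j + 1) * t)]
  have h := congrArg abs (two_mul_sin_half_mul_sum_sin j t)
  rw [abs_mul, abs_mul, abs_two, abs_of_pos ht] at h
  rw [le_div_iff₀ ht]
  linarith

theorem abs_sum_range_mul_le (w g M : ℕ → ℝ) (n : ℕ)
    (hM : ∀ j ≤ n, |∑ k ∈ range (j + 1), g k| ≤ M j) :
    |∑ k ∈ range (n + 1), w k * g k| ≤
      ∑ k ∈ range n, |w k - w (k + 1)| * M k + |w n| * M n := by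
  have hparts := sum_range_by_parts w g (n + 1)
  simp only [smul_eq_mul, Nat.add_sub_cancel] at hparts
  rw [hparts]
  refine (abs_sub _ _).trans ?_
  rw [add_comm, abs_mul]
  gcongr
  · refine (abs_sum_le_sum_abs _ _).trans (sum_le_sum fun k hk => ?_)
    rw [abs_mul, abs_sub_comm]
    exact mul_le_mul_of_nonneg_left (hM k (mem_range.mp hk).le) (abs_nonneg _)
  · exact hM n le_rfl

theorem abs_sum_range_mul_le_of_monotone {w g : ℕ → ℝ} {M : ℝ} (hw : Monotone w)
    (hw0 : 0 ≤ w 0)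
    (n : ℕ) (hM : ∀ j ≤ n, |∑ k ∈ range (j + 1), g k| ≤ M) :
    |∑ k ∈ range (n + 1), w k * g k| ≤ 2 * w n * M := by
  have hM0 : 0 ≤ M := (abs_nonneg _).trans (hM 0 (Nat.zero_le n))
  have hvar : ∑ k ∈ range n, |w k - w (k + 1)| = w n - w 0 := by
    rw [sum_congr rfl fun k _ => by rw [abs_sub_comm, abs_of_nonneg (sub_nonneg.2 (hw k.le_succ))],
      sum_range_sub]
  refine (abs_sum_range_mul_le w g (fun _ => M) n hM).trans ?_
  rw [← sum_mul, hvar, abs_of_nonneg (hw0.trans (hw (Nat.zero_le n)))]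
  nlinarith

theorem abs_sum_rpow_mul_sin_le {β : ℝ} (hβ : 0 ≤ β) {t : ℝ} (ht : 0 < sin (t / 2))
    (n : ℕ) :
    |∑ k ∈ range (n + 1), ((k : ℝ) + 1) ^ β * sin ((k + 1 / 2) * t)| ≤
      2 * ((n : ℝ) + 1) ^ β * (1 / sin (t / 2)) :=
  abs_sum_range_mul_le_of_monotone
    (fun i j hij => rpow_le_rpow (by positivity) (by gcongr) hβ) (by positivity) n
    fun j _ => abs_sum_sin_le ht j

noncomputable def weightedVariation (β : ℝ) (w : ℕ → ℝ) (n : ℕ) : ℝ :=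
  ∑ k ∈ range n,
    ((k : ℝ) + 1) ^ β * |w k / ((k : ℝ) + 1) ^ β - w (k + 1) / ((k : ℝ) + 2) ^ β|

-- The summands are `(k + 1)^β |b k - b (k + 1)|` with `b k = w k / (k + 1)^β`.
theorem weightedVariation_eq (β : ℝ) (w : ℕ → ℝ) (n : ℕ) :
    weightedVariation β w n = ∑ k ∈ range n, ((k : ℝ) + 1) ^ β *
      |w k / ((k : ℝ) + 1) ^ β - w (k + 1) / (((k + 1 : ℕ) : ℝ) + 1) ^ β| := by
  simp only [weightedVariation, Nat.cast_succ, add_assoc, one_add_one_eq_two]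

noncomputable def meanDirichletKernel (w : ℕ → ℝ) (n : ℕ) (t : ℝ) : ℝ :=
  ∑ k ∈ range (n + 1), w k * dirichletKernel k t

theorem div_pi_le_sin_half {t : ℝ} (ht : t ∈ Set.Ioc 0 π) : t / π ≤ sin (t / 2) := by
  have := mul_le_sin (x := t / 2) (by linarith [ht.1]) (by linarith [ht.2])
  rwa [show 2 / π * (t / 2) = t / π by ring] at this

section row

variable {β C : ℝ} {w : ℕ → ℝ} {n : ℕ}

theorem le_mul_of_weightedVariation_le (hβ : 0 ≤ β) (hwn : 0 ≤ w n)
    (hbv : weightedVariation β w n ≤ C * w n)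
    {m : ℕ} (hmn : m ≤ n) : w m ≤ (C + 1) * w n := by
  set b : ℕ → ℝ := fun k => w k / ((k : ℝ) + 1) ^ β
  rw [weightedVariation_eq] at hbv
  change ∑ k ∈ range n, ((k : ℝ) + 1) ^ β * |b k - b (k + 1)| ≤ C * w n at hbv
  have hwb : ∀ k, w k = ((k : ℝ) + 1) ^ β * b k := fun k => by simp only [b]; field_simp
  have hpow_le : ∀ {i j : ℕ}, i ≤ j → ((i : ℝ) + 1) ^ β ≤ ((j : ℝ) + 1) ^ β :=
    fun hij => rpow_le_rpow (by positivity) (by gcongr) hβ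
  have hbm : b m ≤ b n + ∑ k ∈ Ico m n, |b k - b (k + 1)| := by
    have := dist_le_Ico_sum_dist b hmn
    simp only [Real.dist_eq] at this
    linarith [le_abs_self (b m - b n)]
  calc w m = ((m : ℝ) + 1) ^ β * b m := hwb m
    _ ≤ ((m : ℝ) + 1) ^ β * b n +
          ∑ k ∈ Ico m n, ((m : ℝ) + 1) ^ β * |b k - b (k + 1)| := by
      rw [← mul_sum, ← mul_add]; gcongr
    _ ≤ ((n : ℝ) + 1) ^ β * b n +
          ∑ k ∈ range n, ((k : ℝ) + 1) ^ β * |b k - b (k + 1)| := by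
      gcongr ?_ + ?_
      · exact mul_le_mul_of_nonneg_right (hpow_le hmn) (div_nonneg hwn (by positivity))
      · refine (sum_le_sum fun k hk => ?_).trans (sum_le_sum_of_subset_of_nonneg
          (fun k hk => mem_range.2 (mem_Ico.1 hk).2) fun k _ _ => by positivity)
        exact mul_le_mul_of_nonneg_right (hpow_le (mem_Ico.1 hk).1) (abs_nonneg _)
    _ ≤ w n + C * w n := by rw [← hwb]; gcongr
    _ = (C + 1) * w n := by ring

theorem abs_sum_mul_sin_le_of_weightedVariation_le (hβ : 0 ≤ β) (hwn : 0 ≤ w n)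
    (hbv : weightedVariation β w n ≤ C * w n)
    {t : ℝ} (ht : 0 < sin (t / 2)) :
    |∑ k ∈ range (n + 1), w k * sin ((k + 1 / 2) * t)| ≤ 2 * (C + 1) * w n / sin (t / 2) := by
  set b : ℕ → ℝ := fun k => w k / ((k : ℝ) + 1) ^ β
  rw [weightedVariation_eq] at hbv
  change ∑ k ∈ range n, ((k : ℝ) + 1) ^ β * |b k - b (k + 1)| ≤ C * w n at hbv
  have hwb : ∀ k, w k = b k * ((k : ℝ) + 1) ^ β := fun k => by simp only [b]; field_simp
  have habel := abs_sum_range_mul_le b (fun k => ((k : ℝ) + 1) ^ β * sin ((k + 1 / 2) * t))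
    (fun j => 2 * ((j : ℝ) + 1) ^ β * (1 / sin (t / 2))) n
    fun j _ => abs_sum_rpow_mul_sin_le hβ ht j
  have hbn : |b n| = b n := abs_of_nonneg (div_nonneg hwn (by positivity))
  calc |∑ k ∈ range (n + 1), w k * sin ((k + 1 / 2) * t)|
      = |∑ k ∈ range (n + 1), b k * (((k : ℝ) + 1) ^ β * sin ((k + 1 / 2) * t))| := by
        simp only [hwb, mul_assoc]
    _ ≤ 2 / sin (t / 2) *
          (∑ k ∈ range n, ((k : ℝ) + 1) ^ β * |b k - b (k + 1)| + w n) := by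
        refine habel.trans (le_of_eq ?_)
        rw [hbn, hwb n, mul_add, mul_sum]
        congr 1
        · exact sum_congr rfl fun k _ => by ring
        · ring
    _ ≤ 2 / sin (t / 2) * (C * w n + w n) := by gcongr
    _ = 2 * (C + 1) * w n / sin (t / 2) := by ring

@[fun_prop]
theorem continuous_meanDirichletKernel : Continuous (meanDirichletKernel w n) := by
  unfold meanDirichletKernel; fun_prop

theorem two_mul_sin_half_mul_meanDirichletKernel (t : ℝ) :
    2 * sin (t / 2) * meanDirichletKernel w n t =
      ∑ k ∈ range (n + 1), w k * sin ((k + 1 / 2) * t) := by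
  rw [meanDirichletKernel, mul_sum]
  exact sum_congr rfl fun k _ => by rw [← two_mul_sin_half_mul_dirichletKernel]; ring

theorem abs_meanDirichletKernel_le_of_abs_sum_mul_sin_le {t X : ℝ} (ht : t ∈ Set.Ioc 0 π)
    (hX : |∑ k ∈ range (n + 1), w k * sin ((k + 1 / 2) * t)| ≤ X) :
    |meanDirichletKernel w n t| ≤ π * X / (2 * t) := by
  have hsin := div_pi_le_sin_half ht
  have hsin0 : 0 < sin (t / 2) := (div_pos ht.1 pi_pos).trans_le hsin
  have h := congrArg abs (two_mul_sin_half_mul_meanDirichletKernel (w := w) (n := n) t)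
  rw [abs_mul, abs_mul, abs_two, abs_of_pos hsin0] at h
  rw [le_div_iff₀ (by linarith [ht.1])]
  have hX0 : 0 ≤ X := (abs_nonneg _).trans hX
  calc |meanDirichletKernel w n t| * (2 * t)
        ≤ |meanDirichletKernel w n t| * (2 * (π * sin (t / 2))) := by
        gcongr; rwa [div_le_iff₀' pi_pos] at hsin
    _ = π * (2 * sin (t / 2) * |meanDirichletKernel w n t|) := by ring
    _ ≤ π * X := by rw [h]; gcongr

theorem abs_meanDirichletKernel_le_pi_div (hw : ∀ k ≤ n, 0 ≤ w k)
    (hsum : ∑ k ∈ range (n + 1), w k = 1)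
    {t : ℝ} (ht : t ∈ Set.Ioc 0 π) : |meanDirichletKernel w n t| ≤ π / 2 / t := by
  have hX : |∑ k ∈ range (n + 1), w k * sin ((k + 1 / 2) * t)| ≤ 1 := by
    refine (abs_sum_le_sum_abs _ _).trans (hsum ▸ sum_le_sum fun k hk => ?_)
    have hwk := hw k (Nat.lt_succ_iff.mp (mem_range.mp hk))
    rw [abs_mul, abs_of_nonneg hwk]
    exact mul_le_of_le_one_right hwk (abs_sin_le_one _)
  refine (abs_meanDirichletKernel_le_of_abs_sum_mul_sin_le ht hX).trans (le_of_eq ?_)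
  ring

theorem abs_meanDirichletKernel_le_mul_div_sq (hβ : 0 ≤ β) (hwn : 0 ≤ w n)
    (hbv : weightedVariation β w n ≤ C * w n)
    {t : ℝ} (ht : t ∈ Set.Ioc 0 π) :
    |meanDirichletKernel w n t| ≤ π ^ 2 * (C + 1) * w n / t ^ 2 := by
  have hsin := div_pi_le_sin_half ht
  have hsin0 : 0 < sin (t / 2) := (div_pos ht.1 pi_pos).trans_le hsin
  have hCw : 0 ≤ (C + 1) * w n := hwn.trans (le_mul_of_weightedVariation_le hβ hwn hbv le_rfl)
  have hX : |∑ k ∈ range (n + 1), w k * sin ((k + 1 / 2) * t)| ≤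
      2 * (C + 1) * w n * π / t := by
    refine (abs_sum_mul_sin_le_of_weightedVariation_le hβ hwn hbv hsin0).trans ?_
    calc 2 * (C + 1) * w n / sin (t / 2) ≤ 2 * (C + 1) * w n / (t / π) :=
          div_le_div_of_nonneg_left (by linarith) (div_pos ht.1 pi_pos) hsin
      _ = 2 * (C + 1) * w n * π / t := by field_simp
  refine (abs_meanDirichletKernel_le_of_abs_sum_mul_sin_le ht hX).trans (le_of_eq ?_)
  field_simp

end row

theorem abs_intervalIntegral_le_of_abs_le_rpow {F : ℝ → ℝ} {a b c r : ℝ} (hab : a ≤ b)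
    (hr : -1 < r ∨ r ≠ -1 ∧ (0 : ℝ) ∉ Set.uIcc a b)
    (hF : ∀ t ∈ Set.Ioc a b, |F t| ≤ c * t ^ r) :
    |∫ t in a..b, F t| ≤ c * ((b ^ (r + 1) - a ^ (r + 1)) / (r + 1)) := by
  have hint : IntervalIntegrable (fun t => c * t ^ r) volume a b := by
    refine IntervalIntegrable.const_mul ?_ c
    rcases hr with hr | ⟨-, h0⟩
    · exact intervalIntegral.intervalIntegrable_rpow' hr
    · exact intervalIntegral.intervalIntegrable_rpow (Or.inr h0)
  have := intervalIntegral.norm_integral_le_of_norm_le (f := F) hab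
    (Filter.Eventually.of_forall fun t ht => (Real.norm_eq_abs _).trans_le (hF t ht)) hint
  rwa [intervalIntegral.integral_const_mul, integral_rpow hr] at this

theorem abs_intervalIntegral_zero_le_of_abs_le_rpow_sub_one {F : ℝ → ℝ} {c α δ : ℝ}
    (hα : 0 < α) (hδ : 0 ≤ δ) (hF : ∀ t ∈ Set.Ioc 0 δ, |F t| ≤ c * t ^ (α - 1)) :
    |∫ t in 0..δ, F t| ≤ c * δ ^ α / α := by
  have h := abs_intervalIntegral_le_of_abs_le_rpow hδ (Or.inl (by linarith)) hF
  rwa [sub_add_cancel, zero_rpow hα.ne', sub_zero, ← mul_div_assoc] at h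

theorem abs_intervalIntegral_le_of_abs_le_rpow_sub_two {F : ℝ → ℝ} {c α δ b : ℝ}
    (hc : 0 ≤ c) (hα : α < 1) (hδ : 0 < δ) (hδb : δ ≤ b)
    (hF : ∀ t ∈ Set.Ioc δ b, |F t| ≤ c * t ^ (α - 2)) :
    |∫ t in δ..b, F t| ≤ c * δ ^ (α - 1) / (1 - α) := by
  have h0 : (0 : ℝ) ∉ Set.uIcc δ b := by
    rw [Set.uIcc_of_le hδb]; exact fun h => hδ.not_ge h.1
  refine (abs_intervalIntegral_le_of_abs_le_rpow hδb (Or.inr ⟨by linarith, h0⟩) hF).trans ?_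
  rw [show α - 2 + 1 = -(1 - α) by ring, div_neg, ← neg_div, neg_sub, mul_div_assoc]
  gcongr
  rw [neg_sub]
  linarith [rpow_nonneg (hδ.le.trans hδb) (α - 1)]

theorem abs_intervalIntegral_mul_le {ψ K : ℝ → ℝ} {M A B α δ b : ℝ}
    (hψc : Continuous ψ) (hKc : Continuous K) (hα0 : 0 < α) (hα1 : α < 1)
    (hδ : 0 < δ) (hδb : δ ≤ b) (hM : 0 ≤ M) (hB : 0 ≤ B)
    (hψ : ∀ t ∈ Set.Ioc 0 b, |ψ t| ≤ M * t ^ α)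
    (hK₁ : ∀ t ∈ Set.Ioc 0 b, |K t| ≤ A / t)
    (hK₂ : ∀ t ∈ Set.Ioc 0 b, |K t| ≤ B * δ / t ^ 2) :
    |∫ t in 0..b, ψ t * K t| ≤ (M * A / α + M * B / (1 - α)) * δ ^ α := by
  have hψ0 : ∀ t ∈ Set.Ioc 0 b, 0 ≤ M * t ^ α := fun t ht => (abs_nonneg _).trans (hψ t ht)
  have hhead : |∫ t in 0..δ, ψ t * K t| ≤ M * A * δ ^ α / α := by
    refine abs_intervalIntegral_zero_le_of_abs_le_rpow_sub_one hα0 hδ.le fun t ht => ?_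
    have ht' : t ∈ Set.Ioc 0 b := ⟨ht.1, ht.2.trans hδb⟩
    calc |ψ t * K t| ≤ M * t ^ α * (A / t) := by
          rw [abs_mul]; exact mul_le_mul (hψ t ht') (hK₁ t ht') (abs_nonneg _) (hψ0 t ht')
      _ = M * A * t ^ (α - 1) := by rw [rpow_sub_one ht.1.ne']; ring
  have htail : |∫ t in δ..b, ψ t * K t| ≤ M * B * δ * δ ^ (α - 1) / (1 - α) := by
    refine abs_intervalIntegral_le_of_abs_le_rpow_sub_two (by positivity) hα1 hδ hδb
      fun t ht => ?_
    have ht' : t ∈ Set.Ioc 0 b := ⟨hδ.trans ht.1, ht.2⟩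
    calc |ψ t * K t| ≤ M * t ^ α * (B * δ / t ^ 2) := by
          rw [abs_mul]; exact mul_le_mul (hψ t ht') (hK₂ t ht') (abs_nonneg _) (hψ0 t ht')
      _ = M * B * δ * t ^ (α - 2) := by
          rw [rpow_sub ht'.1, rpow_two]; ring
  have hint : ∀ u v, IntervalIntegrable (fun t => ψ t * K t) volume u v :=
    fun u v => (hψc.mul hKc).intervalIntegrable u v
  rw [← intervalIntegral.integral_add_adjacent_intervals (hint 0 δ) (hint δ b)]
  refine (abs_add_le _ _).trans ((add_le_add hhead htail).trans (le_of_eq ?_))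
  rw [mul_assoc (M * B), ← rpow_one_add' hδ.le (by linarith), add_sub_cancel]
  ring

section approximation

variable {f : ℝ → ℝ} {w : ℕ → ℝ} {n : ℕ}

theorem sum_mul_fourierPartialSum_sub_eq_integral (hf : Continuous f)
    (hper : Function.Periodic f (2 * π)) (hsum : ∑ k ∈ range (n + 1), w k = 1) (x : ℝ) :
    ∑ k ∈ range (n + 1), w k * fourierPartialSum f k x - f x =
      1 / π * ∫ t in 0..π, (f (x + t) + f (x - t) - 2 * f x) * meanDirichletKernel w n t := by
  have hcentre : ∑ k ∈ range (n + 1), w k * fourierPartialSum f k x - f x =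
      ∑ k ∈ range (n + 1), w k * (fourierPartialSum f k x - f x) := by
    simp only [mul_sub, sum_sub_distrib, ← sum_mul, hsum, one_mul]
  simp only [hcentre, fourierPartialSum_sub_eq_integral hf hper, meanDirichletKernel, mul_sum]
  rw [intervalIntegral.integral_finsetSum fun k _ => by
    apply Continuous.intervalIntegrable; fun_prop, mul_sum]
  refine sum_congr rfl fun k _ => ?_
  rw [← intervalIntegral.integral_const_mul, ← intervalIntegral.integral_const_mul,
    ← intervalIntegral.integral_const_mul]
  congr 1; ext t; ring

theorem abs_sum_mul_fourierPartialSum_sub_le {α β C L : ℝ} (hα0 : 0 < α) (hα1 : α < 1)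
    (hf : Continuous f) (hper : Function.Periodic f (2 * π))
    (hL : ∀ x y, |f x - f y| ≤ L * |x - y| ^ α) (hβ : 0 ≤ β)
    (hw : ∀ k ≤ n, 0 ≤ w k) (hsum : ∑ k ∈ range (n + 1), w k = 1)
    (hbv : weightedVariation β w n ≤ C * w n) (x : ℝ) :
    |∑ k ∈ range (n + 1), w k * fourierPartialSum f k x - f x| ≤
      (L / α + 2 * L * π * (C + 1) / (1 - α)) * w n ^ α := by
  have hwk : ∀ k ∈ range (n + 1), w k ≤ (C + 1) * w n := fun k hk =>
    le_mul_of_weightedVariation_le hβ (hw n le_rfl) hbv (Nat.lt_succ_iff.mp (mem_range.mp hk))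
  have hCw : 0 < (C + 1) * w n := by
    have := hsum ▸ sum_le_card_nsmul _ _ _ hwk
    rw [card_range, nsmul_eq_mul] at this
    exact pos_of_mul_pos_right (one_pos.trans_le this) (by positivity)
  have hwn : 0 < w n := (hw n le_rfl).lt_of_ne fun h => by simp [← h] at hCw
  have hC : 0 ≤ C + 1 := (pos_of_mul_pos_left hCw hwn.le).le
  have hwnπ : w n ≤ π := by
    have := hsum ▸ single_le_sum (fun k hk => hw k (Nat.lt_succ_iff.mp (mem_range.mp hk)))
      (self_mem_range_succ n)
    linarith [pi_gt_three]
  have hL0 : 0 ≤ L := by simpa using (abs_nonneg _).trans (hL 1 0)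
  have hψ : ∀ t ∈ Set.Ioc 0 π, |f (x + t) + f (x - t) - 2 * f x| ≤ 2 * L * t ^ α := by
    intro t ht
    have hright := hL (x + t) x
    have hleft := hL (x - t) x
    rw [add_sub_cancel_left, abs_of_pos ht.1] at hright
    rw [sub_sub_cancel_left, abs_neg, abs_of_pos ht.1] at hleft
    calc |f (x + t) + f (x - t) - 2 * f x| = |(f (x + t) - f x) + (f (x - t) - f x)| := by ring_nf
      _ ≤ 2 * L * t ^ α := (abs_add_le _ _).trans (by linarith)
  have hint := abs_intervalIntegral_mul_le (by fun_prop) (by fun_prop)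
    hα0 hα1 hwn hwnπ (by positivity) (by positivity) hψ
    (fun t ht => abs_meanDirichletKernel_le_pi_div hw hsum ht)
    (fun t ht => abs_meanDirichletKernel_le_mul_div_sq hβ hwn.le hbv ht)
  rw [sum_mul_fourierPartialSum_sub_eq_integral hf hper hsum, abs_mul,
    abs_of_pos (by positivity : (0 : ℝ) < 1 / π)]
  refine (mul_le_mul_of_nonneg_left hint (by positivity)).trans (le_of_eq ?_)
  field_simp

end approximation

theorem riesz_mean_approx_lipschitz_general
    (α : ℝ) (hα0 : 0 < α) (hα1 : α < 1)
    (f : ℝ → ℝ) (hf : Continuous f) (hper : Function.Periodic f (2 * Real.pi))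
    (hLip : ∃ L : ℝ, ∀ x y : ℝ, |f x - f y| ≤ L * |x - y| ^ α)
    (β : ℝ) (hβ : 0 ≤ β)
    (p : ℕ → ℝ) (hp : ∀ k : ℕ, 0 ≤ p k)
    (hP : ∀ n : ℕ, (∑ k ∈ Finset.range (n + 1), p k) ≠ 0)
    (a : ℕ → ℕ → ℝ)
    (ha : ∀ n k : ℕ, k ≤ n → a n k = p k / ∑ i ∈ Finset.range (n + 1), p i)
    (C : ℝ)
    (hA : ∀ n m : ℕ, m ≤ n →
      ∑ k ∈ Finset.range m,
        ((k : ℝ) + 1) ^ β * |a n k / ((k : ℝ) + 1) ^ β - a n (k + 1) / ((k : ℝ) + 2) ^ β|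
        ≤ C * a n m)
    :
    ∃ C' : ℝ, 0 < C' ∧ ∀ (n : ℕ) (x : ℝ),
      |(∑ k ∈ Finset.range (n + 1), p k * fourierPartialSum f k x) /
          (∑ k ∈ Finset.range (n + 1), p k) - f x|
        ≤ C' * (p n / ∑ k ∈ Finset.range (n + 1), p k) ^ α := by
  obtain ⟨L, hL⟩ := hLip
  set K := L / α + 2 * L * π * (C + 1) / (1 - α)
  refine ⟨max 1 K, lt_max_of_lt_left one_pos, fun n x => ?_⟩
  have hPpos : 0 < ∑ k ∈ range (n + 1), p k :=
    (sum_nonneg fun k _ => hp k).lt_of_ne (hP n).symm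
  have hw : ∀ k ≤ n, 0 ≤ a n k := fun k hk => ha n k hk ▸ div_nonneg (hp k) hPpos.le
  have hmean :
      (∑ k ∈ range (n + 1), p k * fourierPartialSum f k x) / ∑ k ∈ range (n + 1), p k =
      ∑ k ∈ range (n + 1), a n k * fourierPartialSum f k x := by
    rw [sum_div]
    exact sum_congr rfl fun k hk => by rw [ha n k (Nat.lt_succ_iff.mp (mem_range.mp hk))]; ring
  have hsum : ∑ k ∈ range (n + 1), a n k = 1 := by
    rw [sum_congr rfl fun k hk => ha n k (Nat.lt_succ_iff.mp (mem_range.mp hk)), ← sum_div,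
      div_self hPpos.ne']
  rw [hmean, ← ha n n le_rfl]
  calc _ ≤ K * a n n ^ α :=
        abs_sum_mul_fourierPartialSum_sub_le hα0 hα1 hf hper hL hβ hw hsum (hA n n le_rfl) x
    _ ≤ max 1 K * a n n ^ α := by
        gcongr
        · exact rpow_nonneg (hw n le_rfl) α
        · exact le_max_right 1 K

theorem riesz_mean_approx_lipschitz
    (α : ℝ) (hα0 : 0 < α) (hα1 : α < 1)
    (f : ℝ → ℝ) (hf : Continuous f) (hper : Function.Periodic f (2 * Real.pi))
    (hLip : ∃ L : ℝ, ∀ x y : ℝ, |f x - f y| ≤ L * |x - y| ^ α)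
    (β : ℝ) (hβ : 0 ≤ β)
    (p : ℕ → ℝ) (hp : ∀ k : ℕ, 0 ≤ p k)
    (hP : ∀ n : ℕ, (∑ k ∈ Finset.range (n + 1), p k) ≠ 0)
    (a : ℕ → ℕ → ℝ)
    (ha : ∀ n k : ℕ, k ≤ n → a n k = p k / ∑ i ∈ Finset.range (n + 1), p i)
    (htri : ∀ n k : ℕ, n < k → a n k = 0)
    (C : ℝ) (hC : 0 < C)
    (hA : ∀ n m : ℕ, m ≤ n →
      ∑ k ∈ Finset.range m,
        ((k : ℝ) + 1) ^ β * |a n k / ((k : ℝ) + 1) ^ β - a n (k + 1) / ((k : ℝ) + 2) ^ β|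
        ≤ C * a n m)
    :
    ∃ C' : ℝ, 0 < C' ∧ ∀ (n : ℕ) (x : ℝ),
      |(∑ k ∈ Finset.range (n + 1), p k * fourierPartialSum f k x) /
          (∑ k ∈ Finset.range (n + 1), p k) - f x|
        ≤ C' * (p n / ∑ k ∈ Finset.range (n + 1), p k) ^ α :=
  riesz_mean_approx_lipschitz_general α hα0 hα1 f hf hper hLip β hβ p hp hP a ha C hA
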